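/- In the bribery game with restrictions in which Ann believes Bob plays R after B and Bob strongly believes Ann's rationalizable strategies, Selective Rationalizability is empty: there is no step-1 CPS for Bob in Δ_B satisfying S3, since strong belief in Ann's rationalizable strategies forces Bob, conditional on B, to expect I after A and hence to play A, contradicting the outcome required by Ann's restriction being consistent at later steps; formally, S_{RΔ}^∞ = ∅ for Δ_A = {μ_A : μ_A(R | B-node) = 1} and Δ_B the set of all CPSs of Bob. -/

import Mathlib

/-! The bribery game: Ann chooses `N` (payoffs `(0,0)`, Ann's first) or
`B`; after `B`, Bob chooses `R` (payoffs `(-2,0)`) or `A`; after `(B,A)`,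
Ann chooses `P` (payoffs `(-1,-3)`) or `I` (payoffs `(1,1)`). -/

namespace Bribery

/-- Ann's action at the root. -/
inductive Act1 | N | B
deriving DecidableEq

instance : Fintype Act1 := ⟨{Act1.N, Act1.B}, fun x => by cases x <;> simp⟩

/-- Ann's action after `(B,A)`. -/
inductive Act2 | P | I
deriving DecidableEq

instance : Fintype Act2 := ⟨{Act2.P, Act2.I}, fun x => by cases x <;> simp⟩

/-- Bob's action after `B`. -/
inductive ActB | R | A
deriving DecidableEq

instance : Fintype ActB := ⟨{ActB.R, ActB.A}, fun x => by cases x <;> simp⟩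

/-- Ann's strategies: a choice at each of her two information sets. -/
abbrev SA : Type := Act1 × Act2

/-- Bob's strategies. -/
abbrev SB : Type := ActB

/-- Terminal histories. -/
inductive Z | zN | zR | zP | zI
deriving DecidableEq

instance : Fintype Z := ⟨{Z.zN, Z.zR, Z.zP, Z.zI}, fun x => by cases x <;> simp⟩

open Act1 Act2 ActB Z
open scoped Classical

/-- The outcome function `ζ`. -/
def ζ (s : SA × SB) : Z :=
  match s.1.1 with
  | N => zN
  | B => match s.2 with
    | R => zR
    | A => match s.1.2 with
      | P => zP
      | I => zI

/-- Ann's payoffs. -/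
def uA : Z → ℝ
  | zN => 0 | zR => -2 | zP => -1 | zI => 1

/-- Bob's payoffs. -/
def uB : Z → ℝ
  | zN => 0 | zR => 0 | zP => -3 | zI => 1

/-! A CPS of Ann is parametrized by `α ∈ [0,1]`, the initial probability
that Bob plays `R` (her belief after `(B,A)` is necessarily concentrated
on `A`, the only strategy of Bob reaching that information set).  A CPS of
Bob is parametrized by `β ∈ [0,1]`, the probability (conditional on `B`,
his only information set) that Ann's strategy is `(B,P)` (his belief is
concentrated on the strategies of Ann reaching his information set, i.e.
those choosing `B`). -/

/-- Ann's expected payoff at the root from strategy `s`, when Bob plays `R`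
with probability `α`. -/
def EUA (α : ℝ) (s : SA) : ℝ :=
  α * uA (ζ (s, R)) + (1 - α) * uA (ζ (s, A))

/-- Ann's sequential best replies to the CPS with initial probability `α`
of `R`: optimality at the root, and (if her second information set is
reached by her strategy, i.e. she chooses `B`) optimality there under the
conditional belief concentrated on `A`. -/
def ρA (α : ℝ) : Set SA :=
  { s | (∀ s' : SA, EUA α s' ≤ EUA α s) ∧
      (s.1 = B → ∀ a' : Act2, uA (ζ ((B, a'), A)) ≤ uA (ζ ((B, s.2), A))) }

/-- Bob's expected payoff from `b` when, conditional on `B`, Ann plays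
`(B,P)` with probability `β` and `(B,I)` with probability `1-β`. -/
def EUB (β : ℝ) (b : SB) : ℝ :=
  β * uB (ζ ((B, P), b)) + (1 - β) * uB (ζ ((B, I), b))

/-- Bob's sequential best replies. -/
def ρB (β : ℝ) : Set SB :=
  { b | ∀ b' : SB, EUB β b' ≤ EUB β b }

/-- The probability Ann's CPS `α` assigns at the root to a set `X` of
Bob's strategies. -/
noncomputable def massA (α : ℝ) (X : Set SB) : ℝ :=
  (if R ∈ X then α else 0) + (if A ∈ X then 1 - α else 0)

/-- Ann's CPS `α` strongly believes `X ⊆ S_Bob`: probability one at every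
information set of Ann at which `X` is not contradicted.  At the root all
of Bob's strategies are possible; at Ann's second information set her
belief is concentrated on `A`, and `X` is not contradicted there iff
`A ∈ X`, in which case the requirement holds automatically. -/
def SBA (α : ℝ) (X : Set SB) : Prop :=
  X.Nonempty → massA α X = 1

/-- The probability Bob's CPS `β` assigns (conditional on `B`) to a set
`Y` of Ann's strategies. -/
noncomputable def massB (β : ℝ) (Y : Set SA) : ℝ :=
  (if (B, P) ∈ Y then β else 0) + (if (B, I) ∈ Y then 1 - β else 0)

/-- Bob's CPS `β` strongly believes `Y ⊆ S_Ann`: probability one at his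
information set whenever `Y` contains a strategy reaching it (one choosing
`B`). -/
def SBB (β : ℝ) (Y : Set SA) : Prop :=
  (Y ∩ { s : SA | s.1 = B }).Nonempty → massB β Y = 1

/-- The Rationalizability procedure (Ann's and Bob's surviving sets). -/
def Rat : ℕ → Set SA × Set SB
  | 0 => (Set.univ, Set.univ)
  | n + 1 =>
      ({ s | ∃ α : ℝ, 0 ≤ α ∧ α ≤ 1 ∧ s ∈ ρA α ∧
          ∀ q, q < n + 1 → SBA α (Rat q).2 },
       { b | ∃ β : ℝ, 0 ≤ β ∧ β ≤ 1 ∧ b ∈ ρB β ∧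
          ∀ q, q < n + 1 → SBB β (Rat q).1 })

/-- Ann's rationalizable strategies. -/
def RatInfA : Set SA := ⋂ n : ℕ, (Rat n).1

/-- Bob's rationalizable strategies. -/
def RatInfB : Set SB := ⋂ n : ℕ, (Rat n).2

end Bribery

namespace Bribery

/-- Selective Rationalizability for the bribery game, for restriction sets
`ΔA` (on Ann's CPS parameter `α`) and `ΔB` (on Bob's CPS parameter `β`):
step `0` gives the rationalizable strategies; at step `n+1` a strategy
survives iff it is a sequential best reply to a CPS in the player's
restriction set that (S2) strongly believes the opponent's surviving sets
of all previous steps and (S3) strongly believes every step of the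
opponent's Rationalizability sequence. -/
def SelRat (ΔA ΔB : Set ℝ) : ℕ → Set SA × Set SB
  | 0 => (RatInfA, RatInfB)
  | n + 1 =>
      ({ s | ∃ α ∈ ΔA, 0 ≤ α ∧ α ≤ 1 ∧ s ∈ ρA α ∧
          (∀ q, q < n + 1 → SBA α (SelRat ΔA ΔB q).2) ∧
          (∀ q : ℕ, SBA α (Rat q).2) },
       { b | ∃ β ∈ ΔB, 0 ≤ β ∧ β ≤ 1 ∧ b ∈ ρB β ∧
          (∀ q, q < n + 1 → SBB β (SelRat ΔA ΔB q).1) ∧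
          (∀ q : ℕ, SBB β (Rat q).1) })

end Bribery

open Bribery Bribery.Act1 Bribery.Act2 Bribery.ActB Bribery.Z

/-! Strong belief in Ann's rationalizable strategies forces Bob to be certain of `I` after `(B,A)`,
since `P` is never sequentially optimal; so every rationalizable Bob plays `A`. Condition S3 then
makes Ann assign probability one to `A` at the root, i.e. `α = 0`, which her restriction `α = 1`
forbids. Hence already the first step of Selective Rationalizability is empty for Ann. -/

namespace Bribery

lemma Rat_zero : Rat 0 = (Set.univ, Set.univ) := by
  rw [Rat]

lemma mem_Rat_succ_fst {n : ℕ} {s : SA} : s ∈ (Rat (n + 1)).1 ↔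
    ∃ α : ℝ, 0 ≤ α ∧ α ≤ 1 ∧ s ∈ ρA α ∧ ∀ q, q < n + 1 → SBA α (Rat q).2 := by
  rw [Rat]; rfl

lemma mem_Rat_succ_snd {n : ℕ} {b : SB} : b ∈ (Rat (n + 1)).2 ↔
    ∃ β : ℝ, 0 ≤ β ∧ β ≤ 1 ∧ b ∈ ρB β ∧ ∀ q, q < n + 1 → SBB β (Rat q).1 := by
  rw [Rat]; rfl

lemma mem_SelRat_succ_fst {ΔA ΔB : Set ℝ} {n : ℕ} {s : SA} : s ∈ (SelRat ΔA ΔB (n + 1)).1 ↔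
    ∃ α ∈ ΔA, 0 ≤ α ∧ α ≤ 1 ∧ s ∈ ρA α ∧
      (∀ q, q < n + 1 → SBA α (SelRat ΔA ΔB q).2) ∧ (∀ q : ℕ, SBA α (Rat q).2) := by
  rw [SelRat]; rfl

lemma massA_eq_one_sub (α : ℝ) {X : Set SB} (hR : R ∉ X) (hA : A ∈ X) : massA α X = 1 - α := by
  simp [massA, hR, hA]

lemma massB_eq_one_sub (β : ℝ) {Y : Set SA} (hP : (B, P) ∉ Y) (hI : (B, I) ∈ Y) :
    massB β Y = 1 - β := by
  simp [massB, hP, hI]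

lemma SBA_zero_of_mem {X : Set SB} (hA : A ∈ X) : SBA 0 X := fun _ => by
  simp [massA, hA]

lemma SBB_zero_of_mem {Y : Set SA} (hI : (B, I) ∈ Y) : SBB 0 Y := fun _ => by
  simp [massB, hI]

lemma eq_zero_of_SBA {α : ℝ} {X : Set SB} (hR : R ∉ X) (hA : A ∈ X) (h : SBA α X) : α = 0 := by
  have := h ⟨A, hA⟩
  rw [massA_eq_one_sub α hR hA] at this
  linarith

lemma eq_zero_of_SBB {β : ℝ} {Y : Set SA} (hP : (B, P) ∉ Y) (hI : (B, I) ∈ Y) (h : SBB β Y) :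
    β = 0 := by
  have := h ⟨(B, I), hI, rfl⟩
  rw [massB_eq_one_sub β hP hI] at this
  linarith

lemma B_P_not_mem_ρA (α : ℝ) : ((B, P) : SA) ∉ ρA α := fun ⟨_, hopt⟩ => by
  have := hopt rfl I
  norm_num [ζ, uA] at this

lemma B_I_mem_ρA_zero : ((B, I) : SA) ∈ ρA 0 := by
  refine ⟨fun s' => ?_, fun _ a' => ?_⟩
  · rcases s' with ⟨_ | _, _ | _⟩ <;> norm_num [EUA, ζ, uA]
  · cases a' <;> norm_num [ζ, uA]

lemma A_mem_ρB_zero : (A : SB) ∈ ρB 0 := fun b' => by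
  cases b' <;> norm_num [EUB, ζ, uB]

lemma R_not_mem_ρB_zero : (R : SB) ∉ ρB 0 := fun h => by
  have := h A
  norm_num [EUB, ζ, uB] at this

lemma B_P_not_mem_Rat_succ (n : ℕ) : ((B, P) : SA) ∉ (Rat (n + 1)).1 := fun h => by
  obtain ⟨α, -, -, hρ, -⟩ := mem_Rat_succ_fst.1 h
  exact B_P_not_mem_ρA α hρ

lemma B_I_mem_Rat_one : ((B, I) : SA) ∈ (Rat 1).1 := by
  refine mem_Rat_succ_fst.2 ⟨0, le_rfl, zero_le_one, B_I_mem_ρA_zero, fun q hq => ?_⟩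
  obtain rfl : q = 0 := by omega
  exact SBA_zero_of_mem (by simp [Rat_zero])

lemma A_mem_Rat_two : (A : SB) ∈ (Rat 2).2 := by
  refine mem_Rat_succ_snd.2 ⟨0, le_rfl, zero_le_one, A_mem_ρB_zero, fun q hq => ?_⟩
  obtain rfl | rfl : q = 0 ∨ q = 1 := by omega
  · exact SBB_zero_of_mem (by simp [Rat_zero])
  · exact SBB_zero_of_mem B_I_mem_Rat_one

lemma R_not_mem_Rat_two : (R : SB) ∉ (Rat 2).2 := fun h => by
  obtain ⟨β, _, _, hρ, hSB⟩ := mem_Rat_succ_snd.1 h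
  obtain rfl := eq_zero_of_SBB (B_P_not_mem_Rat_succ 0) B_I_mem_Rat_one (hSB 1 one_lt_two)
  exact R_not_mem_ρB_zero hρ

lemma SelRat_one_fst_eq_empty {ΔA : Set ℝ} (hΔA : (0 : ℝ) ∉ ΔA) (ΔB : Set ℝ) :
    (SelRat ΔA ΔB 1).1 = ∅ :=
  Set.eq_empty_of_forall_notMem fun _ h => by
    obtain ⟨α, hα, -, -, -, -, hS3⟩ := mem_SelRat_succ_fst.1 h
    obtain rfl := eq_zero_of_SBA R_not_mem_Rat_two A_mem_Rat_two (hS3 2)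
    exact hΔA hα

end Bribery

/-- In the bribery game with restrictions in which Ann
believes Bob plays `R` after `B` (her restriction set consists of the CPSs
with `μ_A(R | B) = 1`, i.e. `α = 1`) and Bob's restriction set is the set
of all his CPSs, Selective Rationalizability is empty: condition S3
(strong belief in Ann's rationalizable strategies, which forces Bob,
conditional on `B`, to expect `I` after `A` and hence Ann's CPSs to be
consistent with Bob playing `A`) is incompatible with Ann's restriction
`α = 1`, so `S_{RΔ}^∞ = ∅`. -/
theorem bribery_selective_rationalizability_empty :
    { p : SA × SB |
        p.1 ∈ ⋂ n : ℕ, (SelRat {α : ℝ | α = 1} Set.univ n).1 ∧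
        p.2 ∈ ⋂ n : ℕ, (SelRat {α : ℝ | α = 1} Set.univ n).2 } = ∅ := by
  refine Set.eq_empty_of_forall_notMem fun _ ⟨hAnn, _⟩ => ?_
  have hAnn1 := Set.mem_iInter.1 hAnn 1
  rwa [SelRat_one_fst_eq_empty (by norm_num) Set.univ] at hAnn1
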